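/- arXiv:1912.05599 — 7 statements merged into one kernel-verified Lean document; each statement's English description precedes it below -/
import Mathlib

section
/- The maximum value μ := sup_{x≥0} f(x) of the function f(x) := x − x²·M(x) satisfies 0.346813047097384 ≤ μ ≤ 0.346813047097549. -/
open Real MeasureTheory Finset

/-- Density of the standard normal distribution. -/
noncomputable def stdPdf (x : ℝ) : ℝ := Real.exp (-x ^ 2 / 2) / Real.sqrt (2 * Real.pi)

/-- Cumulative distribution function of the standard normal distribution. -/
noncomputable def stdCdf (x : ℝ) : ℝ := ∫ t in Set.Iic x, stdPdf t

/-- The Mills ratio. -/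
noncomputable def mills (x : ℝ) : ℝ := (1 - stdCdf x) / stdPdf x

/-- The function `f(x) = x - x² M(x)`. -/
noncomputable def fMills (x : ℝ) : ℝ := x - x ^ 2 * mills x

/-- `μ`, the supremum of `f` over `[0, ∞)`. -/
noncomputable def muMills : ℝ := sSup (fMills '' Set.Ici 0)

/-- The probability simplex. -/
def probSimplex (n : ℕ) : Set (Fin n → ℝ) :=
  {p | (∀ i, 0 ≤ p i) ∧ ∑ i, p i = 1}

/-- The positive probability simplex. -/
def probSimplexPos (n : ℕ) : Set (Fin n → ℝ) :=
  {p | (∀ i, 0 < p i) ∧ ∑ i, p i = 1}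

/-- Expected number of connected components of Ross's random graph. -/
noncomputable def EC {n : ℕ} (p : Fin n → ℝ) : ℝ :=
  ∑ S ∈ (Finset.univ : Finset (Fin n)).powerset.filter (fun S => S.Nonempty),
    (S.card - 1).factorial * ∏ j ∈ S, p j

/-- The total variation distance. -/
noncomputable def TV {n : ℕ} (p q : Fin n → ℝ) : ℝ := (∑ i, |p i - q i|) / 2

/-- The decreasing rearrangement of a vector. -/
noncomputable def decRearrange {n : ℕ} (x : Fin n → ℝ) : Fin n → ℝ :=
  fun j => x (Tuple.sort x j.rev)

/-- `Majorizes x y` means `x ≻ y`. -/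
def Majorizes {n : ℕ} (x y : Fin n → ℝ) : Prop :=
  (∀ k : ℕ, ∑ j ∈ Finset.univ.filter (fun j : Fin n => (j : ℕ) < k), decRearrange y j
      ≤ ∑ j ∈ Finset.univ.filter (fun j : Fin n => (j : ℕ) < k), decRearrange x j)
  ∧ ∑ j, x j = ∑ j, y j

/-- The coefficients `c_{k,m}`. -/
noncomputable def ckm (m k : ℕ) : ℝ := (m.choose k) * (k + 1).factorial / (m : ℝ) ^ k

/-- The sum `S_m(s)`. -/
noncomputable def Sm (m : ℕ) (s : ℝ) : ℝ := ∑ k ∈ Finset.Icc 1 m, ckm m k * (1 - s) ^ (k - 1)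

/-- The quantity `B_m(s)`. -/
noncomputable def Bm (m : ℕ) (s : ℝ) : ℝ := s * ∑ k ∈ Finset.Icc 1 m, ckm m k * (1 - s) ^ k


/-!
With `T(x) = ∫_x^∞ e^{-t²/2} dt` we have `M(x) = T(x) e^{x²/2}`, so `M' = x M - 1`. A rational
function `R` with `x R - R' ≤ 1` and `R(x) e^{-x²/2} → 0` is then a lower bound for `M`, since
`T - R e^{-x²/2}` decreases to `0`; the eighth convergent of Laplace's continued fraction for `M`
is such an `R`. This bound shows that `f'' ≤ 0` on `[0, 2]` and that `f` stays below `μ` on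
`[2, ∞)`. On `[0, 2]` the concave `f` lies below its tangent at a 15-digit approximation `x₀` of
the maximiser, where `f'(x₀)` is tiny; Taylor enclosures of `e^{-t²/2}` and of its integral pin
down `M(x₀)`, hence `f(x₀)` and `f'(x₀)`, which gives both bounds.
-/

open Filter Topology
open scoped Nat

noncomputable def gaussTail (x : ℝ) : ℝ := ∫ t in Set.Ioi x, exp (-t ^ 2 / 2)

lemma exp_neg_sq_div_two_eq (t : ℝ) : exp (-t ^ 2 / 2) = exp (-(1 / 2) * t ^ 2) := by
  ring_nf

lemma integrable_exp_neg_sq_div_two : Integrable fun t : ℝ => exp (-t ^ 2 / 2) := by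
  simpa only [exp_neg_sq_div_two_eq] using integrable_exp_neg_mul_sq (b := 1 / 2) (by norm_num)

lemma integral_exp_neg_sq_div_two : ∫ t, exp (-t ^ 2 / 2) = √(2 * π) := by
  simp only [exp_neg_sq_div_two_eq, integral_gaussian]
  ring_nf

lemma integral_Ioi_zero_exp_neg_sq_div_two :
    ∫ t in Set.Ioi 0, exp (-t ^ 2 / 2) = √(2 * π) / 2 := by
  simp only [exp_neg_sq_div_two_eq, integral_gaussian_Ioi]
  ring_nf

lemma gaussTail_eq (x : ℝ) : gaussTail x = √(2 * π) / 2 - ∫ t in 0..x, exp (-t ^ 2 / 2) := by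
  rw [← integral_Ioi_zero_exp_neg_sq_div_two, ← intervalIntegral.integral_Ioi_sub_Ioi'
    integrable_exp_neg_sq_div_two.integrableOn integrable_exp_neg_sq_div_two.integrableOn,
    sub_sub_cancel, gaussTail]

lemma gaussTail_nonneg (x : ℝ) : 0 ≤ gaussTail x :=
  setIntegral_nonneg measurableSet_Ioi fun _ _ => (exp_pos _).le

lemma hasDerivAt_gaussTail (x : ℝ) : HasDerivAt gaussTail (-exp (-x ^ 2 / 2)) x := by
  rw [funext gaussTail_eq]
  exact ((Continuous.integral_hasStrictDerivAt (by fun_prop) 0 x).hasDerivAt).const_sub _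

lemma tendsto_gaussTail_atTop : Tendsto gaussTail atTop (𝓝 0) := by
  have h := intervalIntegral_tendsto_integral_Ioi 0
    integrable_exp_neg_sq_div_two.integrableOn tendsto_id
  rw [integral_Ioi_zero_exp_neg_sq_div_two] at h
  simpa [funext gaussTail_eq] using (tendsto_const_nhds (x := √(2 * π) / 2)).sub h

lemma stdCdf_eq (x : ℝ) : stdCdf x = 1 - gaussTail x / √(2 * π) := by
  have hs : √(2 * π) ≠ 0 := by positivity
  have hsplit := intervalIntegral.integral_Iic_add_Ioi (μ := volume) (b := x)
    integrable_exp_neg_sq_div_two.integrableOn integrable_exp_neg_sq_div_two.integrableOn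
  rw [integral_exp_neg_sq_div_two] at hsplit
  simp only [stdCdf, stdPdf, integral_div]
  rw [eq_sub_iff_add_eq, ← add_div, gaussTail, hsplit, div_self hs]

lemma mills_eq (x : ℝ) : mills x = gaussTail x * exp (x ^ 2 / 2) := by
  rw [mills, stdCdf_eq, stdPdf, sub_sub_cancel, div_div_div_cancel_right₀ (by positivity),
    div_eq_mul_inv, ← exp_neg]
  ring_nf

lemma hasDerivAt_exp_neg_sq_div_two (x : ℝ) :
    HasDerivAt (fun t => exp (-t ^ 2 / 2)) (-x * exp (-x ^ 2 / 2)) x := by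
  have h : HasDerivAt (fun t : ℝ => -t ^ 2 / 2) (-x) x :=
    ((hasDerivAt_pow 2 x).fun_neg.div_const 2).congr_deriv (by push_cast; ring)
  exact h.exp.congr_deriv (mul_comm _ _)

lemma hasDerivAt_mills (x : ℝ) : HasDerivAt mills (x * mills x - 1) x := by
  have hexp : HasDerivAt (fun t : ℝ => exp (t ^ 2 / 2)) (x * exp (x ^ 2 / 2)) x := by
    have h : HasDerivAt (fun t : ℝ => t ^ 2 / 2) x x := by
      simpa using (hasDerivAt_pow 2 x).div_const 2
    exact h.exp.congr_deriv (mul_comm _ _)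
  rw [funext mills_eq]
  refine ((hasDerivAt_gaussTail x).mul hexp).congr_deriv ?_
  rw [neg_mul, ← exp_add, show -x ^ 2 / 2 + x ^ 2 / 2 = 0 by ring, exp_zero]
  ring

lemma tendsto_exp_neg_sq_div_two_atTop :
    Tendsto (fun x : ℝ => exp (-x ^ 2 / 2)) atTop (𝓝 0) := by
  have h : Tendsto (fun x : ℝ => -x ^ 2 / 2) atTop atBot := by
    simp_rw [neg_div]
    exact tendsto_neg_atTop_atBot.comp ((tendsto_pow_atTop two_ne_zero).atTop_div_const two_pos)
  exact tendsto_exp_atBot.comp h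

theorem le_mills_of_hasDerivAt {R R' : ℝ → ℝ} (hR : ∀ x, HasDerivAt R (R' x) x)
    (hsub : ∀ x, x * R x - R' x ≤ 1)
    (hlim : Tendsto (fun x => R x * exp (-x ^ 2 / 2)) atTop (𝓝 0)) (x : ℝ) :
    R x ≤ mills x := by
  set G : ℝ → ℝ := fun y => gaussTail y - R y * exp (-y ^ 2 / 2)
  have hG (y : ℝ) : HasDerivAt G ((y * R y - R' y - 1) * exp (-y ^ 2 / 2)) y :=
    ((hasDerivAt_gaussTail y).sub ((hR y).mul (hasDerivAt_exp_neg_sq_div_two y))).congr_deriv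
      (by ring)
  have hanti : Antitone G := antitone_of_deriv_nonpos (fun y => (hG y).differentiableAt)
    fun y => (hG y).deriv ▸ mul_nonpos_of_nonpos_of_nonneg (by linarith [hsub y]) (exp_pos _).le
  have hGx : 0 ≤ G x := hanti.le_of_tendsto (by simpa using tendsto_gaussTail_atTop.sub hlim) x
  rw [mills_eq]
  calc R x = R x * exp (-x ^ 2 / 2) * exp (x ^ 2 / 2) := by
        rw [mul_assoc, ← exp_add, neg_div, neg_add_cancel, exp_zero, mul_one]
    _ ≤ gaussTail x * exp (x ^ 2 / 2) := by gcongr; linarith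

/-- Numerator and denominator of the eighth convergent of Laplace's continued fraction
`M(x) = 1 / (x + 1 / (x + 2 / (x + 3 / (x + ⋯))))`. -/
noncomputable def laplaceNum (x : ℝ) : ℝ := 279 * x + 185 * x ^ 3 + 27 * x ^ 5 + x ^ 7

noncomputable def laplaceDen (x : ℝ) : ℝ := 105 + 420 * x ^ 2 + 210 * x ^ 4 + 28 * x ^ 6 + x ^ 8

lemma laplaceDen_pos (x : ℝ) : 0 < laplaceDen x := by
  unfold laplaceDen; positivity

lemma laplaceNum_nonneg {x : ℝ} (hx : 0 ≤ x) : 0 ≤ laplaceNum x := by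
  unfold laplaceNum; positivity

lemma laplaceNum_le_laplaceDen (x : ℝ) : laplaceNum x ≤ laplaceDen x := by
  unfold laplaceNum laplaceDen
  nlinarith [sq_nonneg (x - 1), sq_nonneg (x * (x - 1)), sq_nonneg (x ^ 2 * (x - 1)),
    sq_nonneg (x ^ 3 * (x - 1)), sq_nonneg (20 * x - 7), sq_nonneg (x * (20 * x - 7))]

lemma hasDerivAt_laplaceNum (x : ℝ) :
    HasDerivAt laplaceNum (279 + 555 * x ^ 2 + 135 * x ^ 4 + 7 * x ^ 6) x := by
  have h := ((((hasDerivAt_id x).const_mul 279).add ((hasDerivAt_pow 3 x).const_mul 185)).add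
    ((hasDerivAt_pow 5 x).const_mul 27)).add (hasDerivAt_pow 7 x)
  exact h.congr_deriv (by push_cast; ring)

lemma hasDerivAt_laplaceDen (x : ℝ) :
    HasDerivAt laplaceDen (840 * x + 840 * x ^ 3 + 168 * x ^ 5 + 8 * x ^ 7) x := by
  have h := (((((hasDerivAt_const x (105 : ℝ)).add ((hasDerivAt_pow 2 x).const_mul 420)).add
    ((hasDerivAt_pow 4 x).const_mul 210)).add ((hasDerivAt_pow 6 x).const_mul 28)).add
    (hasDerivAt_pow 8 x))
  exact h.congr_deriv (by push_cast; ring)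

theorem laplace_div_le_mills (x : ℝ) : laplaceNum x / laplaceDen x ≤ mills x := by
  refine le_mills_of_hasDerivAt (R := fun y => laplaceNum y / laplaceDen y)
    (fun y => (hasDerivAt_laplaceNum y).div (hasDerivAt_laplaceDen y) (laplaceDen_pos y).ne')
    (fun y => ?_) ?_ x
  · -- the convergent's Wronskian: `D² - (x N D - N' D + N D') = 8!`
    have hD := laplaceDen_pos y
    rw [← sub_nonneg, show (1 : ℝ) - _ = 40320 / laplaceDen y ^ 2 by
      field_simp; unfold laplaceNum laplaceDen; ring]
    positivity
  · refine tendsto_of_tendsto_of_tendsto_of_le_of_le' tendsto_const_nhds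
      tendsto_exp_neg_sq_div_two_atTop ?_ ?_ <;>
      filter_upwards [eventually_ge_atTop 0] with y hy
    · exact mul_nonneg (div_nonneg (laplaceNum_nonneg hy) (laplaceDen_pos y).le) (exp_pos _).le
    · exact mul_le_of_le_one_left (exp_pos _).le
        ((div_le_one (laplaceDen_pos y)).2 (laplaceNum_le_laplaceDen y))

noncomputable def fMillsDeriv (x : ℝ) : ℝ := 1 + x ^ 2 - (2 * x + x ^ 3) * mills x

lemma hasDerivAt_fMills (x : ℝ) : HasDerivAt fMills (fMillsDeriv x) x :=
  ((hasDerivAt_id x).sub ((hasDerivAt_pow 2 x).mul (hasDerivAt_mills x))).congr_deriv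
    (by unfold fMillsDeriv; push_cast; ring)

lemma hasDerivAt_fMillsDeriv (x : ℝ) :
    HasDerivAt fMillsDeriv (4 * x + x ^ 3 - (2 + 5 * x ^ 2 + x ^ 4) * mills x) x := by
  have hpoly : HasDerivAt (fun y : ℝ => 2 * y + y ^ 3) (2 + 3 * x ^ 2) x :=
    (((hasDerivAt_id x).const_mul 2).add (hasDerivAt_pow 3 x)).congr_deriv (by push_cast; ring)
  exact (((hasDerivAt_const x 1).add (hasDerivAt_pow 2 x)).sub
    (hpoly.mul (hasDerivAt_mills x))).congr_deriv (by push_cast; ring)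

lemma fMills_second_deriv_nonpos {x : ℝ} (hx0 : 0 ≤ x) (hx2 : x ≤ 2) :
    4 * x + x ^ 3 - (2 + 5 * x ^ 2 + x ^ 4) * mills x ≤ 0 := by
  have hD := laplaceDen_pos x
  have hx4 : x ^ 4 ≤ 2 ^ 4 := pow_le_pow_left₀ hx0 hx2 4
  -- `(2 + 5x² + x⁴) N - (4x + x³) D = 2x (69 - 10x² - x⁴)`
  have hlaplace : 4 * x + x ^ 3 ≤ (2 + 5 * x ^ 2 + x ^ 4) * (laplaceNum x / laplaceDen x) := by
    rw [mul_div_assoc', le_div_iff₀ hD]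
    unfold laplaceNum laplaceDen
    nlinarith [mul_nonneg hx0 (sub_nonneg.2 hx4), mul_nonneg hx0 (sub_nonneg.2 hx2),
      mul_nonneg (mul_nonneg hx0 hx0) (sub_nonneg.2 hx2)]
  nlinarith [mul_le_mul_of_nonneg_left (laplace_div_le_mills x)
    (by positivity : (0 : ℝ) ≤ 2 + 5 * x ^ 2 + x ^ 4)]

theorem concaveOn_fMills : ConcaveOn ℝ (Set.Icc 0 2) fMills :=
  concaveOn_of_hasDerivWithinAt2_nonpos (convex_Icc 0 2)
    (fun x _ => (hasDerivAt_fMills x).continuousAt.continuousWithinAt)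
    (fun x _ => (hasDerivAt_fMills x).hasDerivWithinAt)
    (fun x _ => (hasDerivAt_fMillsDeriv x).hasDerivWithinAt)
    (fun x hx => by
      rw [interior_Icc] at hx
      exact fMills_second_deriv_nonpos hx.1.le hx.2.le)

theorem ConcaveOn.le_add_mul_sub_of_hasDerivAt {S : Set ℝ} {f : ℝ → ℝ} {x y f' : ℝ}
    (hf : ConcaveOn ℝ S f) (hx : x ∈ S) (hy : y ∈ S) (hf' : HasDerivAt f f' x) :
    f y ≤ f x + f' * (y - x) := by
  rcases lt_trichotomy y x with hyx | rfl | hxy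
  · have h := hf.le_slope_of_hasDerivAt hy hx hyx hf'
    rw [slope_def_field, le_div_iff₀ (sub_pos.2 hyx)] at h
    linarith
  · simp
  · have h := hf.slope_le_of_hasDerivAt hx hy hxy hf'
    rw [slope_def_field, div_le_iff₀ (sub_pos.2 hxy)] at h
    linarith

lemma fMills_le_of_two_le {x : ℝ} (hx : 2 ≤ x) : fMills x ≤ 0.346813047097549 := by
  have hD := laplaceDen_pos x
  have hu : 0 ≤ x - 2 := sub_nonneg.2 hx
  calc fMills x ≤ x - x ^ 2 * (laplaceNum x / laplaceDen x) := by
        unfold fMills; gcongr; exact laplace_div_le_mills x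
    _ ≤ 0.346813047097549 := by
        rw [mul_div_assoc', sub_le_comm, le_div_iff₀ hD]
        unfold laplaceNum laplaceDen
        nlinarith [pow_nonneg hu 2, pow_nonneg hu 3, pow_nonneg hu 4, pow_nonneg hu 5,
          pow_nonneg hu 6, pow_nonneg hu 7, pow_nonneg hu 8]

theorem abs_integral_exp_neg_sq_div_two_sub_le {b : ℝ} (hb : 0 ≤ b) (hb2 : b ^ 2 ≤ 2)
    {n : ℕ} (hn : 0 < n) :
    |(∫ t in 0..b, exp (-t ^ 2 / 2)) -
        ∑ m ∈ range n, (-1 / 2) ^ m * b ^ (2 * m + 1) / (m ! * (2 * m + 1))| ≤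
      b ^ (2 * n + 1) / 2 ^ n * ((n + 1) / (n ! * n * (2 * n + 1))) := by
  have hterm (m : ℕ) (t : ℝ) : (-t ^ 2 / 2) ^ m / m ! = (-1 / 2) ^ m / m ! * t ^ (2 * m) := by
    rw [pow_mul]; ring
  have htaylor : ∑ m ∈ range n, (-1 / 2) ^ m * b ^ (2 * m + 1) / (m ! * (2 * m + 1)) =
      ∫ t in 0..b, ∑ m ∈ range n, (-t ^ 2 / 2) ^ m / m ! := by
    rw [intervalIntegral.integral_finsetSum fun m _ =>
      (Continuous.intervalIntegrable (by fun_prop) _ _)]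
    refine Finset.sum_congr rfl fun m _ => ?_
    simp_rw [hterm, intervalIntegral.integral_const_mul, integral_pow,
      zero_pow (Nat.succ_ne_zero _), sub_zero]
    push_cast
    field_simp
  have hremainder : ∫ t in 0..b, t ^ (2 * n) / 2 ^ n * ((n + 1) / (n ! * n)) =
      b ^ (2 * n + 1) / 2 ^ n * ((n + 1) / (n ! * n * (2 * n + 1))) := by
    rw [intervalIntegral.integral_mul_const, intervalIntegral.integral_div, integral_pow,
      zero_pow (Nat.succ_ne_zero _), sub_zero]
    push_cast
    field_simp
  rw [htaylor, ← intervalIntegral.integral_sub (Continuous.intervalIntegrable (by fun_prop) _ _)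
    (Continuous.intervalIntegrable (by fun_prop) _ _), ← hremainder, ← Real.norm_eq_abs]
  have hint : IntervalIntegrable (fun t : ℝ => t ^ (2 * n) / 2 ^ n * ((n + 1) / (n ! * n)))
      volume 0 b := Continuous.intervalIntegrable (by fun_prop) _ _
  refine intervalIntegral.norm_integral_le_of_norm_le hb (ae_of_all _ fun t ht => ?_) hint
  have habs : |-t ^ 2 / 2| = t ^ 2 / 2 := by
    rw [neg_div, abs_neg, abs_of_nonneg (by positivity)]
  have ht2 : t ^ 2 ≤ 2 := (pow_le_pow_left₀ ht.1.le ht.2 2).trans hb2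
  calc ‖exp (-t ^ 2 / 2) - ∑ m ∈ range n, (-t ^ 2 / 2) ^ m / (m ! : ℝ)‖
      ≤ |-t ^ 2 / 2| ^ n * (n.succ / (n ! * n)) := Real.exp_bound (by rw [habs]; linarith) hn
    _ = t ^ (2 * n) / 2 ^ n * ((n + 1) / (n ! * n)) := by
        rw [habs, div_pow, pow_mul]; push_cast; ring

/-- The maximiser of `fMills`, to 15 digits. -/
noncomputable def xMax : ℝ := 1.16152788927448

lemma sqrt_two_mul_pi_mem : √(2 * π) ∈ Set.Icc 2.5066282746310005 2.5066282746310006 := by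
  constructor
  · rw [Real.le_sqrt (by norm_num) (by positivity)]
    nlinarith [pi_gt_d20]
  · rw [Real.sqrt_le_left (by norm_num)]
    nlinarith [pi_lt_d20]

lemma integral_exp_neg_sq_div_two_xMax_mem :
    ∫ t in 0..xMax, exp (-t ^ 2 / 2) ∈ Set.Icc 0.9457166473315654 0.9457166473315655 := by
  have h := abs_sub_le_iff.1 <| abs_integral_exp_neg_sq_div_two_sub_le (b := xMax)
    (by norm_num [xMax]) (by norm_num [xMax]) (n := 16) (by norm_num)
  simp only [Finset.sum_range_succ, Finset.sum_range_zero, xMax] at h ⊢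
  norm_num [Nat.factorial] at h
  constructor <;> linarith

lemma exp_sq_xMax_div_two_mem :
    exp (xMax ^ 2 / 2) ∈ Set.Icc 1.9631955313824076 1.9631955313824078 := by
  have h := abs_sub_le_iff.1 <| Real.exp_bound (x := xMax ^ 2 / 2) (n := 16)
    (by rw [abs_of_nonneg (by positivity)]; norm_num [xMax]) (by norm_num)
  rw [abs_of_nonneg (by positivity)] at h
  simp only [Finset.sum_range_succ, Finset.sum_range_zero, xMax] at h ⊢
  norm_num [Nat.factorial] at h
  constructor <;> linarith

lemma mills_xMax_mem : mills xMax ∈ Set.Icc 0.60387401780090 0.60387401780091 := by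
  obtain ⟨hs₁, hs₂⟩ := sqrt_two_mul_pi_mem
  obtain ⟨hw₁, hw₂⟩ := integral_exp_neg_sq_div_two_xMax_mem
  obtain ⟨he₁, he₂⟩ := exp_sq_xMax_div_two_mem
  have hT : gaussTail xMax ∈ Set.Icc 0.30759748998393475 0.3075974899839349 := by
    rw [gaussTail_eq]; constructor <;> linarith
  rw [mills_eq]
  constructor
  · calc (0.60387401780090 : ℝ) ≤ 0.30759748998393475 * 1.9631955313824076 := by norm_num
      _ ≤ _ := mul_le_mul hT.1 he₁ (by norm_num) (gaussTail_nonneg _)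
  · calc _ ≤ (0.3075974899839349 : ℝ) * 1.9631955313824078 :=
          mul_le_mul hT.2 he₂ (exp_pos _).le (by norm_num)
      _ ≤ 0.60387401780091 := by norm_num

lemma fMills_xMax_mem : fMills xMax ∈ Set.Icc 0.34681304709746 0.34681304709748 := by
  obtain ⟨hm₁, hm₂⟩ := mills_xMax_mem
  unfold fMills
  constructor <;> norm_num [xMax] at hm₁ hm₂ ⊢ <;> linarith

lemma abs_fMillsDeriv_xMax_le : |fMillsDeriv xMax| ≤ 3e-14 := by
  obtain ⟨hm₁, hm₂⟩ := mills_xMax_mem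
  unfold fMillsDeriv
  rw [abs_le]
  constructor <;> norm_num [xMax] at hm₁ hm₂ ⊢ <;> linarith

lemma fMills_le_of_mem_Icc {x : ℝ} (hx : x ∈ Set.Icc 0 2) : fMills x ≤ 0.346813047097549 := by
  have hxMax : xMax ∈ Set.Icc 0 2 := by norm_num [xMax]
  have htangent := concaveOn_fMills.le_add_mul_sub_of_hasDerivAt hxMax hx (hasDerivAt_fMills xMax)
  have hdist : |x - xMax| ≤ 2 := by
    rw [abs_le]; constructor <;> linarith [hx.1, hx.2, hxMax.1, hxMax.2]
  have hslope : fMillsDeriv xMax * (x - xMax) ≤ 3e-14 * 2 :=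
    calc _ ≤ |fMillsDeriv xMax| * |x - xMax| := by rw [← abs_mul]; exact le_abs_self _
      _ ≤ 3e-14 * 2 := mul_le_mul abs_fMillsDeriv_xMax_le hdist (abs_nonneg _) (by norm_num)
  linarith [fMills_xMax_mem.2]

lemma fMills_le {x : ℝ} (hx : 0 ≤ x) : fMills x ≤ 0.346813047097549 := by
  rcases le_total x 2 with h | h
  · exact fMills_le_of_mem_Icc ⟨hx, h⟩
  · exact fMills_le_of_two_le h

/-- Numerical bounds on `μ`, the maximum value of `f(x) = x - x² M(x)` over `[0, ∞)`. -/
theorem muMills_bounds :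
    0.346813047097384 ≤ muMills ∧ muMills ≤ 0.346813047097549 := by
  have hle : ∀ y ∈ fMills '' Set.Ici 0, y ≤ 0.346813047097549 := by
    rintro _ ⟨x, hx, rfl⟩
    exact fMills_le hx
  constructor
  · calc (0.346813047097384 : ℝ) ≤ fMills xMax := by linarith [fMills_xMax_mem.1]
      _ ≤ muMills := le_csSup ⟨_, hle⟩ ⟨xMax, by norm_num [xMax], rfl⟩
  · exact csSup_le ⟨fMills 0, 0, Set.self_mem_Ici, rfl⟩ hle
end

section
/- The function E_C is Schur concave on the probability simplex: for all p, q ∈ 𝒫ₙ, if p ≺ q (p is majorized by q) then E_C(p) ≥ E_C(q). -/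
open Real MeasureTheory Finset

/-! Each coordinate enters `E_C` multi-affinely with nonnegative coefficients, so with all other
coordinates fixed and `p i + p j` fixed, `E_C` is a nondecreasing affine function of `p i * p j`.
Hence a Robin Hood transfer (moving mass from a larger coordinate to a smaller one without
reversing their order) does not decrease `E_C`. If `q ≻ p`, the decreasing rearrangement of `p` is
reached from that of `q` by finitely many such transfers (Hardy–Littlewood–Pólya), and `E_C` is
invariant under permutations. -/

section PowersetSum

variable {ι : Type*}

noncomputable def powersetSum (f : ℕ → ℝ) (s : Finset ι) (p : ι → ℝ) : ℝ :=
  ∑ T ∈ s.powerset, f #T * ∏ t ∈ T, p t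

theorem powersetSum_congr (f : ℕ → ℝ) {s : Finset ι} {p q : ι → ℝ} (h : ∀ t ∈ s, p t = q t) :
    powersetSum f s p = powersetSum f s q :=
  sum_congr rfl fun T hT => by
    rw [prod_congr rfl fun t ht => h t (mem_powerset.1 hT ht)]

theorem powersetSum_nonneg {f : ℕ → ℝ} (hf : ∀ k, 0 ≤ f k) {s : Finset ι} {p : ι → ℝ}
    (hp : ∀ t ∈ s, 0 ≤ p t) : 0 ≤ powersetSum f s p :=
  sum_nonneg fun _ hT =>
    mul_nonneg (hf _) (prod_nonneg fun t ht => hp t (mem_powerset.1 hT ht))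

theorem powersetSum_insert [DecidableEq ι] (f : ℕ → ℝ) {s : Finset ι} {i : ι} (hi : i ∉ s)
    (p : ι → ℝ) :
    powersetSum f (insert i s) p =
      powersetSum f s p + p i * powersetSum (fun k => f (k + 1)) s p := by
  rw [powersetSum, sum_powerset_insert hi, powersetSum, powersetSum, mul_sum]
  congr 1
  refine sum_congr rfl fun T hT => ?_
  have hiT : i ∉ T := fun h => hi (mem_powerset.1 hT h)
  rw [card_insert_of_notMem hiT, prod_insert hiT]
  ring

theorem powersetSum_insert_insert [DecidableEq ι] (f : ℕ → ℝ) {s : Finset ι} {i j : ι}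
    (hij : i ≠ j) (hi : i ∉ s) (hj : j ∉ s) (p : ι → ℝ) :
    powersetSum f (insert i (insert j s)) p =
      powersetSum f s p + (p i + p j) * powersetSum (fun k => f (k + 1)) s p +
        p i * p j * powersetSum (fun k => f (k + 2)) s p := by
  rw [powersetSum_insert f (by simp [hij, hi]), powersetSum_insert f hj,
    powersetSum_insert _ hj]
  ring

theorem powersetSum_univ_le_of_pair [Fintype ι] [DecidableEq ι] {f : ℕ → ℝ} (hf : ∀ k, 0 ≤ f k)
    {p q : ι → ℝ} {i j : ι} (hij : i ≠ j) (hp : 0 ≤ p) (hpq : ∀ t, t ≠ i → t ≠ j → p t = q t)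
    (hsum : p i + p j = q i + q j) (hprod : p i * p j ≤ q i * q j) :
    powersetSum f univ p ≤ powersetSum f univ q := by
  set R := univ \ {i, j}
  have hR : ∀ t ∈ R, p t = q t := fun t ht => by
    simp only [R, mem_sdiff, mem_insert, mem_singleton, not_or] at ht
    exact hpq t ht.2.1 ht.2.2
  have huniv : (univ : Finset ι) = insert i (insert j R) := by
    ext t
    by_cases t = i <;> by_cases t = j <;> simp_all [R]
  have hiR : i ∉ R := by simp [R]
  have hjR : j ∉ R := by simp [R]
  rw [huniv, powersetSum_insert_insert f hij hiR hjR, powersetSum_insert_insert f hij hiR hjR,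
    powersetSum_congr f hR, powersetSum_congr _ hR, powersetSum_congr _ hR, hsum]
  gcongr
  exact powersetSum_nonneg (fun k => hf _) fun t ht => hR t ht ▸ hp t

end PowersetSum

section Transfer

variable {ι : Type*} [DecidableEq ι]

def IsTransfer (x x' : ι → ℝ) : Prop :=
  ∃ i j δ, i ≠ j ∧ 0 ≤ δ ∧ x j + δ ≤ x i - δ ∧ x' = x - Pi.single i δ + Pi.single j δ

theorem IsTransfer.nonneg {x x' : ι → ℝ} (h : IsTransfer x x') (hx : 0 ≤ x) : 0 ≤ x' := by
  obtain ⟨i, j, δ, hij, hδ, hle, rfl⟩ := h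
  intro t
  have hxj : 0 ≤ x j := hx j
  by_cases hti : t = i
  · subst hti
    simp only [Pi.zero_apply, Pi.add_apply, Pi.sub_apply, Pi.single_eq_same, Pi.single_eq_of_ne hij]
    linarith
  by_cases htj : t = j
  · subst htj
    simp only [Pi.zero_apply, Pi.add_apply, Pi.sub_apply, Pi.single_eq_same, Pi.single_eq_of_ne hti]
    linarith
  simpa [Pi.single_eq_of_ne hti, Pi.single_eq_of_ne htj] using hx t

theorem IsTransfer.sum_eq [Fintype ι] {x x' : ι → ℝ} (h : IsTransfer x x') :
    ∑ t, x' t = ∑ t, x t := by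
  obtain ⟨i, j, δ, -, -, -, rfl⟩ := h
  simp [sum_add_distrib, sum_sub_distrib]

theorem card_ne_transfer_lt [Fintype ι] {x y : ι → ℝ} {i j : ι}
    {δ : ℝ} (hij : i ≠ j) (hi : x i ≠ y i) (hj : x j ≠ y j)
    (hδ : x i - δ = y i ∨ x j + δ = y j) :
    #{t | (x - Pi.single i δ + Pi.single j δ : ι → ℝ) t ≠ y t} < #{t | x t ≠ y t} := by
  refine card_lt_card ((ssubset_iff_of_subset fun t ht => ?_).2 ?_)
  · simp only [mem_filter, mem_univ, true_and] at ht ⊢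
    by_cases hti : t = i
    · rwa [hti]
    by_cases htj : t = j
    · rwa [htj]
    simpa [Pi.single_eq_of_ne hti, Pi.single_eq_of_ne htj] using ht
  · rcases hδ with h | h
    · exact ⟨i, by simp [hi], by simp [Pi.single_eq_of_ne hij, h]⟩
    · exact ⟨j, by simp [hj], by simp [Pi.single_eq_of_ne hij.symm, h]⟩

end Transfer

section EC

variable {n : ℕ}

theorem EC_eq_powersetSum (p : Fin n → ℝ) :
    EC p = powersetSum (fun k => ((k - 1).factorial : ℝ)) univ p - 1 := by
  have hempty : {T ∈ (univ : Finset (Fin n)).powerset | ¬T.Nonempty} = {∅} := by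
    ext T
    simp [not_nonempty_iff_eq_empty]
  rw [EC, powersetSum, ← sum_filter_add_sum_filter_not univ.powerset Finset.Nonempty, hempty]
  simp

theorem EC_comp_perm (p : Fin n → ℝ) (e : Equiv.Perm (Fin n)) : EC (p ∘ e) = EC p := by
  simp only [EC_eq_powersetSum, powersetSum, powerset_univ]
  congr 1
  exact Fintype.sum_equiv e.finsetCongr _ _ fun T => by simp [prod_map]

theorem EC_le_of_isTransfer {x x' : Fin n → ℝ} (hx : 0 ≤ x) (h : IsTransfer x x') :
    EC x ≤ EC x' := by
  obtain ⟨i, j, δ, hij, hδ, hle, rfl⟩ := h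
  rw [EC_eq_powersetSum, EC_eq_powersetSum]
  gcongr 1
  refine powersetSum_univ_le_of_pair (fun k => by positivity) hij hx (fun t hti htj => ?_) ?_ ?_
  · simp [Pi.single_eq_of_ne hti, Pi.single_eq_of_ne htj]
  · simp [Pi.single_eq_of_ne hij, Pi.single_eq_of_ne hij.symm]
  · simp only [Pi.add_apply, Pi.sub_apply, Pi.single_eq_same, Pi.single_eq_of_ne hij,
      Pi.single_eq_of_ne hij.symm, add_zero, sub_zero]
    nlinarith

theorem EC_le_of_reflTransGen {x y : Fin n → ℝ} (hx : 0 ≤ x)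
    (h : Relation.ReflTransGen IsTransfer x y) : EC x ≤ EC y := by
  induction h using Relation.ReflTransGen.head_induction_on with
  | refl => rfl
  | head hxz _ ih => exact (EC_le_of_isTransfer hx hxz).trans (ih (hxz.nonneg hx))

end EC

section PrefixSum

variable {n : ℕ}

noncomputable def prefixSum (x : Fin n → ℝ) (m : ℕ) : ℝ :=
  ∑ j ∈ univ.filter (fun j : Fin n => (j : ℕ) < m), x j

theorem prefixSum_add (x y : Fin n → ℝ) (m : ℕ) :
    prefixSum (x + y) m = prefixSum x m + prefixSum y m :=
  sum_add_distrib

theorem prefixSum_sub (x y : Fin n → ℝ) (m : ℕ) :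
    prefixSum (x - y) m = prefixSum x m - prefixSum y m :=
  sum_sub_distrib ..

theorem prefixSum_single (j : Fin n) (δ : ℝ) (m : ℕ) :
    prefixSum (Pi.single j δ) m = if (j : ℕ) < m then δ else 0 := by
  simp [prefixSum, sum_pi_single']

theorem prefixSum_succ (x : Fin n → ℝ) (j : Fin n) :
    prefixSum x (j + 1) = prefixSum x j + x j := by
  have h : univ.filter (fun i : Fin n => (i : ℕ) < j + 1) =
      insert j (univ.filter fun i : Fin n => (i : ℕ) < j) := by
    ext i
    simp only [mem_filter, mem_univ, true_and, mem_insert, Fin.ext_iff]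
    omega
  rw [prefixSum, h, sum_insert (by simp), add_comm]
  rfl

theorem prefixSum_eq_of_eq_zero {x : Fin n → ℝ} {a b : ℕ} (hab : a ≤ b)
    (h : ∀ i : Fin n, a ≤ i → (i : ℕ) < b → x i = 0) : prefixSum x b = prefixSum x a := by
  refine (sum_subset (fun i hi => ?_) fun i hi hia => h i ?_ ?_).symm
  · simp only [mem_filter, mem_univ, true_and] at hi ⊢
    omega
  · simpa using hia
  · simpa using hi

end PrefixSum

section Majorization

variable {n : ℕ}

theorem exists_first_lt_of_sum_eq {x y : Fin n → ℝ} (hsum : ∑ i, x i = ∑ i, y i) (hxy : x ≠ y) :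
    ∃ k, x k < y k ∧ ∀ i < k, y i ≤ x i := by
  have hne : (univ.filter fun i => x i < y i).Nonempty := by
    by_contra hempty
    have hle : ∀ i ∈ univ, y i ≤ x i := by simpa using hempty
    exact hxy (funext fun i => ((sum_eq_sum_iff_of_le hle).1 hsum.symm i (mem_univ i)).symm)
  obtain ⟨k, hk, hmin⟩ := exists_min_image _ id hne
  refine ⟨k, (mem_filter.1 hk).2, fun i hik => not_lt.1 fun hi => ?_⟩
  exact (hmin i (by simp [hi])).not_gt hik

theorem exists_last_gt_before {x y : Fin n → ℝ} (hpre : ∀ m, prefixSum y m ≤ prefixSum x m)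
    {k : Fin n} (hk : x k < y k) (hbefore : ∀ i < k, y i ≤ x i) :
    ∃ j < k, y j < x j ∧ ∀ i, j < i → i < k → x i = y i := by
  have hlt : prefixSum y k < prefixSum x k := by
    have := hpre (k + 1)
    rw [prefixSum_succ, prefixSum_succ] at this
    linarith
  have hne : (univ.filter fun i => i < k ∧ y i < x i).Nonempty := by
    obtain ⟨i, hi, hyx⟩ := exists_lt_of_sum_lt hlt
    exact ⟨i, by simpa [hyx] using hi⟩
  obtain ⟨j, hj, hmax⟩ := exists_max_image _ id hne
  simp only [mem_filter, mem_univ, true_and] at hj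
  refine ⟨j, hj.1, hj.2, fun i hji hik => le_antisymm (not_lt.1 fun hi => ?_) (hbefore i hik)⟩
  exact (hmax i (by simp [hik, hi])).not_gt hji

theorem prefixSum_le_transfer {x y : Fin n → ℝ} (hpre : ∀ m, prefixSum y m ≤ prefixSum x m)
    {j k : Fin n} (hjk : j < k) (hmid : ∀ i, j < i → i < k → x i = y i) {δ : ℝ}
    (hδ : δ ≤ x j - y j) (m : ℕ) :
    prefixSum y m ≤ prefixSum (x - Pi.single j δ + Pi.single k δ) m := by
  have hjk' : (j : ℕ) < k := hjk
  rw [prefixSum_add, prefixSum_sub, prefixSum_single, prefixSum_single]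
  split_ifs with hjm hkm
  · linarith [hpre m]
  · have hgap : prefixSum (x - y) m = prefixSum (x - y) (j + 1) :=
      prefixSum_eq_of_eq_zero hjm fun i hji him =>
        sub_eq_zero.2 (hmid i (by rw [Fin.lt_def]; omega) (by rw [Fin.lt_def]; omega))
    rw [prefixSum_succ, prefixSum_sub, prefixSum_sub, Pi.sub_apply] at hgap
    linarith [hpre j]
  · omega
  · linarith [hpre m]

theorem exists_isTransfer_of_prefixSum_le {x y : Fin n → ℝ} (hy : Antitone y)
    (hpre : ∀ m, prefixSum y m ≤ prefixSum x m) (hsum : ∑ i, x i = ∑ i, y i) (hxy : x ≠ y) :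
    ∃ x', IsTransfer x x' ∧ (∀ m, prefixSum y m ≤ prefixSum x' m) ∧
      #{i | x' i ≠ y i} < #{i | x i ≠ y i} := by
  obtain ⟨k, hk, hbefore⟩ := exists_first_lt_of_sum_eq hsum hxy
  obtain ⟨j, hjk, hj, hmid⟩ := exists_last_gt_before hpre hk hbefore
  -- `x j` or `x k` reaches its target, and `x j - δ ≥ y j ≥ y k ≥ x k + δ` keeps the order.
  set δ := min (x j - y j) (y k - x k)
  have hδj : δ ≤ x j - y j := min_le_left _ _
  have hδk : δ ≤ y k - x k := min_le_right _ _
  have hδ : 0 ≤ δ := le_min (by linarith) (by linarith)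
  have hδeq : x j - δ = y j ∨ x k + δ = y k := by
    rcases min_choice (x j - y j) (y k - x k) with h | h
    · exact Or.inl (by linarith)
    · exact Or.inr (by linarith)
  refine ⟨_, ⟨j, k, δ, hjk.ne, hδ, ?_, rfl⟩, prefixSum_le_transfer hpre hjk hmid hδj,
    card_ne_transfer_lt hjk.ne hj.ne' hk.ne hδeq⟩
  linarith [hy hjk.le]

theorem reflTransGen_isTransfer_of_prefixSum_le {y : Fin n → ℝ} (hy : Antitone y) (x : Fin n → ℝ)
    (hpre : ∀ m, prefixSum y m ≤ prefixSum x m) (hsum : ∑ i, x i = ∑ i, y i) :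
    Relation.ReflTransGen IsTransfer x y := by
  induction hN : #{i | x i ≠ y i} using Nat.strong_induction_on generalizing x with
  | _ N ih =>
    by_cases hxy : x = y
    · rw [hxy]
    obtain ⟨x', hxx', hpre', hcard⟩ := exists_isTransfer_of_prefixSum_le hy hpre hsum hxy
    exact .head hxx' (ih _ (hN ▸ hcard) x' hpre' (hxx'.sum_eq.trans hsum) rfl)

end Majorization

theorem EC_decRearrange {n : ℕ} (x : Fin n → ℝ) : EC (decRearrange x) = EC x :=
  EC_comp_perm x (Fin.revPerm.trans (Tuple.sort x))

theorem sum_decRearrange {n : ℕ} (x : Fin n → ℝ) : ∑ i, decRearrange x i = ∑ i, x i :=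
  Equiv.sum_comp (Fin.revPerm.trans (Tuple.sort x)) x

theorem antitone_decRearrange {n : ℕ} (x : Fin n → ℝ) : Antitone (decRearrange x) :=
  fun _ _ hab => Tuple.monotone_sort x (Fin.rev_le_rev.2 hab)

theorem EC_schur_concave_general (n : ℕ) (p q : Fin n → ℝ)
    (hq : q ∈ probSimplex n) (hmaj : Majorizes q p) :
    EC p ≥ EC q := by
  have hsum : ∑ i, decRearrange q i = ∑ i, decRearrange p i := by
    rw [sum_decRearrange, sum_decRearrange, hmaj.2]
  have hchain := reflTransGen_isTransfer_of_prefixSum_le (antitone_decRearrange p)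
    (decRearrange q) hmaj.1 hsum
  have hle : EC (decRearrange q) ≤ EC (decRearrange p) :=
    EC_le_of_reflTransGen (fun i => hq.1 _) hchain
  rwa [EC_decRearrange, EC_decRearrange] at hle

/-- `E_C` is Schur concave on the probability simplex. -/
theorem EC_schur_concave (n : ℕ) (p q : Fin n → ℝ)
    (hp : p ∈ probSimplex n) (hq : q ∈ probSimplex n) (hmaj : Majorizes q p) :
    EC p ≥ EC q :=
  EC_schur_concave_general n p q hq hmaj
end

section
/- View E_C as the polynomial function on ℝ^n given by E_C(p) := ∑_{∅ ≠ S ⊆ {1,…,n}} (|S|−1)! ∏_{j∈S} p_j. Then for all p ∈ ℝ^n and all distinct indices i, j ∈ {1,…,n}, the difference of partial derivatives satisfies ∂_{p_i}E_C(p) − ∂_{p_j}E_C(p) = (p_j − p_i) · ∑_{S* ⊆ {1,…,n}∖{i,j}} (|S*|+1)! ∏_{l∈S*} p_l, where the sum runs over all subsets S* (including the empty set, whose product is 1). -/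
/-!
Each monomial of `E_C` is squarefree, so `∂ᵢ E_C(p) = ∑_{T ⊆ [n] ∖ {i}} |T|! ∏_{l ∈ T} p_l`:
removing `i` from a set `S ∋ i` turns `(|S| - 1)!` into `|T|!`. Splitting this sum and the one
for `∂ⱼ` according to whether the other index lies in `T`, the terms avoiding both `i` and `j`
cancel, and the remaining ones contribute `p_j (|S| + 1)! ∏_S p` and `p_i (|S| + 1)! ∏_S p`.
-/

open Real MeasureTheory Finset

namespace Finset

variable {α : Type*} [DecidableEq α]

theorem sum_powerset_filter_mem {β : Type*} [AddCommMonoid β] {s : Finset α} {a : α}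
    (ha : a ∈ s) (f : Finset α → β) :
    ∑ S ∈ s.powerset with a ∈ S, f S = ∑ T ∈ (s.erase a).powerset, f (insert a T) := by
  conv_lhs => rw [← insert_erase ha]
  rw [sum_filter, sum_powerset_insert (notMem_erase a s)]
  have hnot : ∀ T ∈ (s.erase a).powerset, a ∉ T := fun T hT h =>
    notMem_erase a s (mem_powerset.1 hT h)
  simp +contextual [hnot]

theorem sum_powerset_insert_mul_prod {R : Type*} [CommSemiring R] (c : ℕ → R) (p : α → R)
    {s : Finset α} {a : α} (ha : a ∉ s) :
    ∑ T ∈ (insert a s).powerset, c #T * ∏ l ∈ T, p l =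
      ∑ T ∈ s.powerset, c #T * ∏ l ∈ T, p l +
        p a * ∑ T ∈ s.powerset, c (#T + 1) * ∏ l ∈ T, p l := by
  rw [sum_powerset_insert ha, mul_sum]
  congr 1
  refine sum_congr rfl fun T hT => ?_
  have haT : a ∉ T := fun h => ha (mem_powerset.1 hT h)
  rw [card_insert_of_notMem haT, prod_insert haT]
  ring

end Finset

section PartialDerivative

variable {𝕜 ι : Type*} [NontriviallyNormedField 𝕜] [Fintype ι] [DecidableEq ι]

theorem fderiv_finsetProd_apply_single (S : Finset ι) (p : ι → 𝕜) (i : ι) :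
    fderiv 𝕜 (fun q : ι → 𝕜 => ∏ j ∈ S, q j) p (Pi.single i 1) =
      if i ∈ S then ∏ j ∈ S.erase i, p j else 0 := by
  rw [hasFDerivAt_finsetProd.fderiv]
  simp [Pi.single_apply]

theorem fderiv_sum_mul_prod_apply_single (𝒮 : Finset (Finset ι)) (w : Finset ι → 𝕜)
    (p : ι → 𝕜) (i : ι) :
    fderiv 𝕜 (fun q : ι → 𝕜 => ∑ S ∈ 𝒮, w S * ∏ j ∈ S, q j) p (Pi.single i 1) =
      ∑ S ∈ 𝒮 with i ∈ S, w S * ∏ j ∈ S.erase i, p j := by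
  rw [fderiv_fun_sum (fun S _ => by fun_prop), sum_filter, _root_.sum_apply]
  refine sum_congr rfl fun S _ => ?_
  rw [fderiv_const_mul (by fun_prop), _root_.smul_apply,
    fderiv_finsetProd_apply_single, smul_eq_mul, mul_ite, mul_zero]

end PartialDerivative

theorem fderiv_EC_apply_single {n : ℕ} (p : Fin n → ℝ) (i : Fin n) :
    fderiv ℝ EC p (Pi.single i 1) =
      ∑ T ∈ (univ.erase i).powerset, (T.card.factorial : ℝ) * ∏ l ∈ T, p l := by
  unfold EC
  rw [fderiv_sum_mul_prod_apply_single, filter_filter,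
    filter_congr fun S _ => and_iff_right_of_imp fun h => ⟨i, h⟩,
    sum_powerset_filter_mem (mem_univ i)]
  refine sum_congr rfl fun T hT => ?_
  have hiT : i ∉ T := fun h => notMem_erase i univ (mem_powerset.1 hT h)
  rw [card_insert_of_notMem hiT, erase_insert hiT, Nat.add_sub_cancel]

/-- The difference of partial derivatives of `E_C`. -/
theorem EC_partial_derivative_difference (n : ℕ) (p : Fin n → ℝ) (i j : Fin n) (hij : i ≠ j) :
    fderiv ℝ EC p (Pi.single i 1) - fderiv ℝ EC p (Pi.single j 1)
      = (p j - p i) *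
        ∑ S ∈ ((Finset.univ : Finset (Fin n)) \ {i, j}).powerset,
          (S.card + 1).factorial * ∏ l ∈ S, p l := by
  have hi : univ.erase i = insert j (univ \ {i, j}) := by ext; grind
  have hj : univ.erase j = insert i (univ \ {i, j}) := by ext; grind
  rw [fderiv_EC_apply_single, fderiv_EC_apply_single, hi, hj,
    sum_powerset_insert_mul_prod (fun k => (k.factorial : ℝ)) _ (by simp),
    sum_powerset_insert_mul_prod (fun k => (k.factorial : ℝ)) _ (by simp)]
  ring
end

section
/- For every integer m ≥ 1 and every s ∈ (0,1], S_m(s) ≤ 2 + (3 + μ·√m)/s. -/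
open Real MeasureTheory Finset

/-!
Since `c_{k,m} = (k+1) ∏_{i<k} (1 - i/m) ≤ (k+1) e^{-(k-1)²/(2m)}` and `(1-s)^{k-1} ≤ e^{-s(k-1)}`,
with `j = k - 1` the sum `S_m(s)` is at most `∑_{j<m} (j+2) w(j)`, where
`w(u) = exp(-u²/(2m) - s u)`. The term `j = 0` equals `2`, and as `w` decreases on `[0, ∞)`
every other term is at most `∫_{j-1}^{j} (u+3) w(u) du`. Finally `∫_0^∞ w ≤ 1/s`, while
integrating `-w' = (u/m + s) w` and rescaling `u = √m v` give
`∫_0^∞ u w(u) du = (√m / s) f(s √m) ≤ μ √m / s`.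
The same identity with `m = 1` reads `f(a) = a ∫_0^∞ u e^{-u²/2 - a u} du ≤ min(a, 1/a)`,
so `f` is bounded above and `μ` is a genuine supremum.
-/

open Set Filter Topology

lemma stdPdf_eq (x : ℝ) : stdPdf x = exp (-(1 / 2) * x ^ 2) / √(2 * π) := by
  rw [stdPdf]
  ring_nf

lemma integrable_stdPdf : Integrable stdPdf := by
  rw [funext stdPdf_eq]
  exact (integrable_exp_neg_mul_sq (by norm_num)).div_const _

lemma integral_stdPdf : ∫ x, stdPdf x = 1 := by
  simp only [stdPdf_eq, integral_div, integral_gaussian]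
  rw [div_eq_one_iff_eq (by positivity)]
  ring_nf

lemma one_sub_stdCdf (x : ℝ) : 1 - stdCdf x = ∫ t in Ioi x, stdPdf t := by
  rw [← integral_stdPdf, ← intervalIntegral.integral_Iic_add_Ioi integrable_stdPdf.integrableOn
    integrable_stdPdf.integrableOn, stdCdf, add_sub_cancel_left]

lemma setIntegral_Ioi_comp_add_right (g : ℝ → ℝ) (a b : ℝ) :
    ∫ v in Ioi a, g (v + b) = ∫ t in Ioi (a + b), g t := by
  simpa using (measurePreserving_add_right volume b).setIntegral_preimage_emb
    (measurableEmbedding_addRight b) g (Ioi (a + b))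

lemma integral_exp_neg_mul_Ioi_zero {s : ℝ} (hs : 0 < s) :
    ∫ u in Ioi 0, exp (-(s * u)) = s⁻¹ := by
  simpa using integral_rpow_mul_exp_neg_mul_Ioi one_pos hs

lemma integral_mul_exp_neg_mul_Ioi_zero {s : ℝ} (hs : 0 < s) :
    ∫ u in Ioi 0, u * exp (-(s * u)) = (s ^ 2)⁻¹ := by
  have h := integral_rpow_mul_exp_neg_mul_Ioi two_pos hs
  norm_num at h
  exact h

noncomputable def gaussExpWeight (c s u : ℝ) : ℝ := exp (-(u ^ 2 / (2 * c)) - s * u)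

lemma mills_eq_integral (a : ℝ) : mills a = ∫ v in Ioi 0, gaussExpWeight 1 a v := by
  have hweight : ∀ v, gaussExpWeight 1 a v = stdPdf (v + a) / stdPdf a := fun v => by
    rw [gaussExpWeight, stdPdf, stdPdf, div_div_div_cancel_right₀ (by positivity), ← exp_sub]
    ring_nf
  simp_rw [hweight, integral_div, setIntegral_Ioi_comp_add_right, zero_add, mills, one_sub_stdCdf]

section gaussExpWeight

variable {c s : ℝ}

lemma gaussExpWeight_pos (u : ℝ) : 0 < gaussExpWeight c s u := exp_pos _

@[fun_prop]
lemma continuous_gaussExpWeight : Continuous (gaussExpWeight c s) := by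
  unfold gaussExpWeight
  fun_prop

lemma gaussExpWeight_le_exp (hc : 0 ≤ c) (u : ℝ) : gaussExpWeight c s u ≤ exp (-(s * u)) := by
  have : 0 ≤ u ^ 2 / (2 * c) := by positivity
  exact exp_le_exp.2 (by linarith)

lemma gaussExpWeight_antitoneOn (hc : 0 ≤ c) (hs : 0 ≤ s) :
    AntitoneOn (gaussExpWeight c s) (Ici 0) := fun u hu v _ huv => by
  have hu : 0 ≤ u := hu
  unfold gaussExpWeight
  gcongr

lemma hasDerivAt_gaussExpWeight (hc : c ≠ 0) (u : ℝ) :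
    HasDerivAt (gaussExpWeight c s) (-(u / c + s) * gaussExpWeight c s u) u := by
  have hexponent : HasDerivAt (fun u => -(u ^ 2 / (2 * c)) - s * u) (-(u / c + s)) u := by
    refine ((((hasDerivAt_pow 2 u).div_const (2 * c)).neg).sub
      ((hasDerivAt_id u).const_mul s)).congr_deriv ?_
    field_simp
    ring
  rw [mul_comm]
  exact hexponent.exp

lemma tendsto_gaussExpWeight_atTop (hc : 0 ≤ c) (hs : 0 < s) :
    Tendsto (gaussExpWeight c s) atTop (𝓝 0) :=
  squeeze_zero (fun u => (gaussExpWeight_pos u).le) (gaussExpWeight_le_exp hc)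
    (tendsto_exp_neg_atTop_nhds_zero.comp (tendsto_id.const_mul_atTop hs))
lemma integrableOn_gaussExpWeight (hc : 0 ≤ c) (hs : 0 < s) :
    IntegrableOn (gaussExpWeight c s) (Ioi 0) := by
  have hexp : IntegrableOn (fun u => exp (-(s * u))) (Ioi 0) := by
    simpa only [neg_mul] using exp_neg_integrableOn_Ioi 0 hs
  refine hexp.mono' continuous_gaussExpWeight.aestronglyMeasurable
    (Eventually.of_forall fun u => ?_)
  rw [Real.norm_of_nonneg (gaussExpWeight_pos u).le]
  exact gaussExpWeight_le_exp hc u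

lemma integral_gaussExpWeight_le (hc : 0 ≤ c) (hs : 0 < s) :
    ∫ u in Ioi 0, gaussExpWeight c s u ≤ s⁻¹ := by
  rw [← integral_exp_neg_mul_Ioi_zero hs]
  exact setIntegral_mono (integrableOn_gaussExpWeight hc hs)
    (by simpa only [neg_mul] using exp_neg_integrableOn_Ioi 0 hs) (gaussExpWeight_le_exp hc)

lemma hasDerivAt_neg_gaussExpWeight (hc : c ≠ 0) (u : ℝ) :
    HasDerivAt (fun u => -gaussExpWeight c s u) ((u / c + s) * gaussExpWeight c s u) u :=
  (hasDerivAt_gaussExpWeight hc u).neg.congr_deriv (by ring)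

lemma integrableOn_add_mul_gaussExpWeight (hc : 0 < c) (hs : 0 < s) :
    IntegrableOn (fun u => (u / c + s) * gaussExpWeight c s u) (Ioi 0) := by
  refine integrableOn_Ioi_deriv_of_nonneg' (fun u _ => hasDerivAt_neg_gaussExpWeight hc.ne' u)
    (fun u hu => ?_) (tendsto_gaussExpWeight_atTop hc.le hs).neg
  have : 0 < u := hu
  have := gaussExpWeight_pos (c := c) (s := s) u
  positivity

lemma integral_add_mul_gaussExpWeight (hc : 0 < c) (hs : 0 < s) :
    ∫ u in Ioi 0, (u / c + s) * gaussExpWeight c s u = 1 := by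
  rw [integral_Ioi_of_hasDerivAt_of_tendsto' (fun u _ => hasDerivAt_neg_gaussExpWeight hc.ne' u)
    (integrableOn_add_mul_gaussExpWeight hc hs) (tendsto_gaussExpWeight_atTop hc.le hs).neg]
  simp [gaussExpWeight]

lemma mul_gaussExpWeight_eq (hc : c ≠ 0) (u : ℝ) :
    u * gaussExpWeight c s u
      = c * ((u / c + s) * gaussExpWeight c s u) - c * s * gaussExpWeight c s u := by
  field_simp
  ring

lemma integrableOn_mul_gaussExpWeight (hc : 0 < c) (hs : 0 < s) :
    IntegrableOn (fun u => u * gaussExpWeight c s u) (Ioi 0) := by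
  simp_rw [mul_gaussExpWeight_eq hc.ne']
  exact ((integrableOn_add_mul_gaussExpWeight hc hs).const_mul c).sub
    ((integrableOn_gaussExpWeight hc.le hs).const_mul (c * s))

lemma integral_mul_gaussExpWeight (hc : 0 < c) (hs : 0 < s) :
    ∫ u in Ioi 0, u * gaussExpWeight c s u
      = c * (1 - s * ∫ u in Ioi 0, gaussExpWeight c s u) := by
  simp_rw [mul_gaussExpWeight_eq hc.ne']
  rw [integral_sub ((integrableOn_add_mul_gaussExpWeight hc hs).const_mul c)
    ((integrableOn_gaussExpWeight hc.le hs).const_mul (c * s)), integral_const_mul,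
    integral_const_mul, integral_add_mul_gaussExpWeight hc hs]
  ring

lemma integral_mul_gaussExpWeight_le (hc : 0 < c) (hs : 0 < s) :
    ∫ u in Ioi 0, u * gaussExpWeight c s u ≤ (s ^ 2)⁻¹ := by
  have hint : IntegrableOn (fun u => u * exp (-(s * u))) (Ioi 0) := by
    simpa using integrableOn_rpow_mul_exp_neg_mul_rpow (s := 1) (p := 1) (by norm_num) one_pos hs
  rw [← integral_mul_exp_neg_mul_Ioi_zero hs]
  exact setIntegral_mono_on (integrableOn_mul_gaussExpWeight hc hs) hint measurableSet_Ioi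
    fun u hu => mul_le_mul_of_nonneg_left (gaussExpWeight_le_exp hc.le u) (le_of_lt hu)

lemma integral_gaussExpWeight_eq_mills (hc : 0 < c) (s : ℝ) :
    ∫ u in Ioi 0, gaussExpWeight c s u = √c * mills (s * √c) := by
  have hscale : ∀ v, gaussExpWeight 1 (s * √c) v = gaussExpWeight c s (√c * v) := fun v => by
    simp only [gaussExpWeight]
    congr 1
    field_simp
    linear_combination v ^ 2 * sq_sqrt hc.le
  simp_rw [mills_eq_integral, hscale, integral_comp_mul_left_Ioi _ _ (sqrt_pos.2 hc), mul_zero,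
    smul_eq_mul, mul_inv_cancel_left₀ (sqrt_pos.2 hc).ne']

lemma fMills_eq_integral {a : ℝ} (ha : 0 < a) :
    fMills a = a * ∫ u in Ioi 0, u * gaussExpWeight 1 a u := by
  rw [integral_mul_gaussExpWeight one_pos ha, ← mills_eq_integral, fMills]
  ring

lemma fMills_le_one {x : ℝ} (hx : 0 ≤ x) : fMills x ≤ 1 := by
  rcases hx.eq_or_lt with rfl | hx
  · simp [fMills]
  have hle_one : ∫ u in Ioi 0, u * gaussExpWeight 1 x u ≤ 1 := by
    rw [integral_mul_gaussExpWeight one_pos hx, one_mul, sub_le_self_iff]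
    exact mul_nonneg hx.le (setIntegral_nonneg measurableSet_Ioi
      fun u _ => (gaussExpWeight_pos u).le)
  have hle_inv_sq := integral_mul_gaussExpWeight_le one_pos hx
  rw [fMills_eq_integral hx]
  rcases le_total x 1 with hx1 | hx1
  · nlinarith
  · calc x * ∫ u in Ioi 0, u * gaussExpWeight 1 x u ≤ x * (x ^ 2)⁻¹ := by gcongr
      _ = x⁻¹ := by field_simp
      _ ≤ 1 := inv_le_one_of_one_le₀ hx1

lemma fMills_le_muMills {x : ℝ} (hx : 0 ≤ x) : fMills x ≤ muMills :=
  le_csSup ⟨1, by rintro _ ⟨y, hy, rfl⟩; exact fMills_le_one hy⟩ ⟨x, hx, rfl⟩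

lemma integral_mul_gaussExpWeight_eq_fMills (hc : 0 < c) (hs : 0 < s) :
    ∫ u in Ioi 0, u * gaussExpWeight c s u = √c / s * fMills (s * √c) := by
  rw [integral_mul_gaussExpWeight hc hs, integral_gaussExpWeight_eq_mills hc, fMills]
  field_simp
  rw [sq_sqrt hc.le]

lemma integrableOn_add_const_mul_gaussExpWeight (hc : 0 < c) (hs : 0 < s) (a : ℝ) :
    IntegrableOn (fun u => (u + a) * gaussExpWeight c s u) (Ioi 0) := by
  simp_rw [add_mul]
  exact (integrableOn_mul_gaussExpWeight hc hs).add
    ((integrableOn_gaussExpWeight hc.le hs).const_mul a)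

lemma integral_add_three_mul_gaussExpWeight_le (hc : 0 < c) (hs : 0 < s) :
    ∫ u in Ioi 0, (u + 3) * gaussExpWeight c s u ≤ (3 + muMills * √c) / s := by
  simp_rw [add_mul]
  rw [integral_add (integrableOn_mul_gaussExpWeight hc hs)
    ((integrableOn_gaussExpWeight hc.le hs).const_mul 3), integral_const_mul,
    integral_mul_gaussExpWeight_eq_fMills hc hs]
  have hf := fMills_le_muMills (x := s * √c) (by positivity)
  have hE := integral_gaussExpWeight_le hc.le hs
  calc √c / s * fMills (s * √c) + 3 * ∫ u in Ioi 0, gaussExpWeight c s u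
      ≤ √c / s * muMills + 3 * s⁻¹ := by gcongr
    _ = (3 + muMills * √c) / s := by field_simp; ring

end gaussExpWeight

lemma descFactorial_div_pow_le_exp {m k : ℕ} (hk : k ≤ m) :
    (m.descFactorial k : ℝ) / (m : ℝ) ^ k ≤ exp (-(∑ i ∈ range k, (i : ℝ)) / m) := by
  have hprod :
      (m.descFactorial k : ℝ) / (m : ℝ) ^ k = ∏ i ∈ range k, (1 - (i : ℝ) / m) := by
    rw [Nat.descFactorial_eq_prod_range, Nat.cast_prod, ← card_range k, ← prod_const,
      card_range, ← prod_div_distrib]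
    refine prod_congr rfl fun i hi => ?_
    have him : i < m := (mem_range.1 hi).trans_le hk
    rw [Nat.cast_sub him.le, sub_div, div_self (Nat.cast_ne_zero.2 (by omega))]
  rw [hprod, neg_div, sum_div, ← sum_neg_distrib, exp_sum]
  refine prod_le_prod (fun i hi => ?_) fun i _ => ?_
  · have him : (i : ℝ) < m := by exact_mod_cast (mem_range.1 hi).trans_le hk
    rw [sub_nonneg, div_le_one (by linarith [(i.cast_nonneg : (0 : ℝ) ≤ i)])]
    exact him.le
  · linarith [add_one_le_exp (-((i : ℝ) / m))]

lemma ckm_eq (m k : ℕ) : ckm m k = (k + 1) * ((m.descFactorial k : ℝ) / (m : ℝ) ^ k) := by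
  rw [ckm, Nat.descFactorial_eq_factorial_mul_choose, Nat.factorial_succ]
  push_cast
  ring

lemma ckm_succ_le {m j : ℕ} (hj : j < m) :
    ckm m (j + 1) ≤ (j + 2) * exp (-((j : ℝ) ^ 2 / (2 * m))) := by
  have hsum : ∑ i ∈ range (j + 1), (i : ℝ) = j * (j + 1) / 2 := by
    have h := congrArg (Nat.cast : ℕ → ℝ) (sum_range_id_mul_two (j + 1))
    rw [Nat.add_sub_cancel] at h
    push_cast at h
    linarith
  have hm : (0 : ℝ) < m := by exact_mod_cast (Nat.zero_le j).trans_lt hj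
  rw [ckm_eq]
  push_cast
  rw [show (j : ℝ) + 1 + 1 = j + 2 by ring]
  gcongr
  refine (descFactorial_div_pow_le_exp hj).trans (exp_le_exp.2 ?_)
  rw [hsum, neg_div, neg_le_neg_iff, div_div]
  gcongr
  nlinarith

lemma ckm_succ_mul_pow_le {m j : ℕ} (hj : j < m) {s : ℝ} (hs1 : s ≤ 1) :
    ckm m (j + 1) * (1 - s) ^ j ≤ (j + 2) * gaussExpWeight m s j := by
  have hpow : (1 - s) ^ j ≤ exp (-(s * j)) := by
    rw [← neg_mul, mul_comm, exp_nat_mul]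
    exact pow_le_pow_left₀ (by linarith) (by linarith [add_one_le_exp (-s)]) j
  calc ckm m (j + 1) * (1 - s) ^ j
      ≤ (j + 2) * exp (-((j : ℝ) ^ 2 / (2 * m))) * exp (-(s * j)) := by
        have : 0 ≤ 1 - s := sub_nonneg.2 hs1
        gcongr
        exact ckm_succ_le hj
    _ = (j + 2) * gaussExpWeight m s j := by
        rw [mul_assoc, ← exp_add, gaussExpWeight, ← sub_eq_add_neg]

lemma Sm_eq_sum_range (m : ℕ) (s : ℝ) :
    Sm m s = ∑ j ∈ range m, ckm m (j + 1) * (1 - s) ^ j := by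
  rw [Sm, ← Finset.Ico_add_one_right_eq_Icc, sum_Ico_eq_sum_range]
  simp [add_comm]

lemma sum_range_le_intervalIntegral {f : ℕ → ℝ} {g : ℝ → ℝ} {n : ℕ}
    (hg : ∀ k < n, IntervalIntegrable g volume k (k + 1))
    (hfg : ∀ k < n, ∀ u ∈ Icc (k : ℝ) (k + 1), f k ≤ g u) :
    ∑ k ∈ range n, f k ≤ ∫ u in (0 : ℝ)..n, g u := by
  have hadj := intervalIntegral.sum_integral_adjacent_intervals (a := fun k : ℕ => (k : ℝ))
    (by exact_mod_cast hg)
  push_cast at hadj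
  rw [← hadj]
  refine sum_le_sum fun k hk => ?_
  calc f k = ∫ _ in (k : ℝ)..(k + 1), f k := by simp
    _ ≤ ∫ u in (k : ℝ)..(k + 1), g u :=
      intervalIntegral.integral_mono_on (by linarith) intervalIntegrable_const
        (hg k (mem_range.1 hk)) (hfg k (mem_range.1 hk))

lemma intervalIntegral_le_integral_Ioi {g : ℝ → ℝ} {b : ℝ} (hb : 0 ≤ b)
    (hg : IntegrableOn g (Ioi 0)) (hg0 : ∀ u ∈ Ioi (0 : ℝ), 0 ≤ g u) :
    ∫ u in (0 : ℝ)..b, g u ≤ ∫ u in Ioi 0, g u := by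
  rw [intervalIntegral.integral_of_le hb]
  exact setIntegral_mono_set hg ((ae_restrict_iff' measurableSet_Ioi).2 (.of_forall hg0))
    Ioc_subset_Ioi_self.eventuallyLE

/-- Upper bound on `S_m(s)` in terms of `μ`. -/
theorem Sm_upper_bound_mu (m : ℕ) (hm : 1 ≤ m) (s : ℝ) (hs : s ∈ Set.Ioc (0:ℝ) 1) :
    Sm m s ≤ 2 + (3 + muMills * Real.sqrt (m : ℝ)) / s := by
  obtain ⟨hs0, hs1⟩ := hs
  obtain ⟨n, rfl⟩ : ∃ n, m = n + 1 := ⟨m - 1, by omega⟩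
  have hc : (0 : ℝ) < (n + 1 : ℕ) := by positivity
  set E := gaussExpWeight (n + 1 : ℕ) s
  have hstep : ∀ k < n, ∀ u ∈ Icc (k : ℝ) (k + 1),
      ((k + 1 : ℕ) + 2) * E (k + 1 : ℕ) ≤ (u + 3) * E u := by
    intro k _ u ⟨hku, huk⟩
    have hu : (0 : ℝ) ≤ u := (Nat.cast_nonneg k).trans hku
    push_cast
    refine mul_le_mul (by linarith) ?_ (gaussExpWeight_pos _).le (by linarith)
    exact gaussExpWeight_antitoneOn hc.le hs0.le hu (by simp; positivity) huk
  calc Sm (n + 1) s ≤ ∑ j ∈ range (n + 1), ((j : ℝ) + 2) * E j := by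
        rw [Sm_eq_sum_range]
        exact sum_le_sum fun j hj => ckm_succ_mul_pow_le (mem_range.1 hj) hs1
    _ = 2 + ∑ k ∈ range n, ((k + 1 : ℕ) + 2) * E (k + 1 : ℕ) := by
        rw [sum_range_succ', add_comm]
        simp [E, gaussExpWeight]
    _ ≤ 2 + ∫ u in (0 : ℝ)..n, (u + 3) * E u := by
        gcongr
        exact sum_range_le_intervalIntegral
          (fun k _ => (by fun_prop : Continuous _).intervalIntegrable _ _) hstep
    _ ≤ 2 + ∫ u in Ioi 0, (u + 3) * E u := by
        gcongr
        exact intervalIntegral_le_integral_Ioi n.cast_nonneg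
          (integrableOn_add_const_mul_gaussExpWeight hc hs0 3)
          fun u hu => mul_nonneg (by linarith [mem_Ioi.1 hu]) (gaussExpWeight_pos u).le
    _ ≤ 2 + (3 + muMills * √(n + 1 : ℕ)) / s := by
        gcongr
        exact integral_add_three_mul_gaussExpWeight_le hc hs0
end

section
/- For all integers m ≥ 1 and 1 ≤ k ≤ m, c_{k,m} ≥ (k+1)·exp(−k²/m). -/
open Real MeasureTheory Finset

/-!
Since `c_{k,m} = (k+1) ∏_{i<k} (1 - i/m)`, it suffices to show `∑_{i<k} -log (1 - i/m) ≤ k²/m`.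
Put `g x = x log x` and `u_i = 1 - i/m`. The tangent line of the convex function `g` at `u_i`,
evaluated at `u_{i+1} = u_i - 1/m`, gives `-log u_i ≤ m (g u_{i+1} - g u_i) + 1`. Summing, the
right-hand side telescopes to `m g(1 - k/m) + k`, and `x log x ≤ x (x - 1)` bounds this by `k²/m`.
-/

namespace Real

lemma mul_log_tangent_le {u v : ℝ} (hu : 0 < u) (hv : 0 ≤ v) :
    (v - u) * (1 + log u) ≤ v * log v - u * log u := by
  rcases hv.eq_or_lt with rfl | hv
  · rw [log_zero]
    linarith
  · have h := one_sub_inv_le_log_of_pos (div_pos hv hu)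
    rw [log_div hv.ne' hu.ne', inv_div] at h
    have : v * (1 - u / v) = v - u := by field_simp
    nlinarith

lemma mul_log_le_mul_sub_one {x : ℝ} (hx : 0 ≤ x) : x * log x ≤ x * (x - 1) := by
  rcases hx.eq_or_lt with rfl | hx
  · simp
  · exact mul_le_mul_of_nonneg_left (log_le_sub_one_of_pos hx) hx.le

end Real

lemma sum_neg_log_one_sub_div_le {m k : ℕ} (hm : 0 < m) (hkm : k ≤ m) :
    ∑ i ∈ range k, -log (1 - i / m) ≤ k ^ 2 / m := by
  have hm' : (0 : ℝ) < m := by exact_mod_cast hm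
  set g : ℕ → ℝ := fun i => (1 - i / m) * log (1 - i / m)
  have hstep : ∀ i ∈ range k, -log (1 - i / m) ≤ m * (g (i + 1) - g i) + 1 := by
    intro i hi
    have hi : i + 1 ≤ m := (mem_range.1 hi).trans_le hkm
    have hpos : 0 < 1 - (i : ℝ) / m := by
      rw [sub_pos, div_lt_one hm']
      exact_mod_cast hi
    have hnonneg : 0 ≤ 1 - ((i + 1 : ℕ) : ℝ) / m := by
      rw [sub_nonneg, div_le_one hm']
      exact_mod_cast hi
    have h := Real.mul_log_tangent_le hpos hnonneg
    have hdiff : 1 - ((i + 1 : ℕ) : ℝ) / m - (1 - i / m) = -1 / m := by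
      push_cast
      ring
    rw [hdiff] at h
    have hcancel : (m : ℝ) * (-1 / m * (1 + log (1 - i / m))) = -(1 + log (1 - i / m)) := by
      field_simp
    simp only [g]
    linarith [mul_le_mul_of_nonneg_left h hm'.le]
  have hend : m * g k ≤ -k + k ^ 2 / m := by
    have hk : (k : ℝ) ≤ m := by exact_mod_cast hkm
    have h := Real.mul_log_le_mul_sub_one (x := 1 - (k : ℝ) / m)
      (by rw [sub_nonneg, div_le_one hm']; exact hk)
    calc (m : ℝ) * g k ≤ m * ((1 - k / m) * (1 - k / m - 1)) := by gcongr
      _ = -k + k ^ 2 / m := by field_simp; ring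
  calc ∑ i ∈ range k, -log (1 - i / m)
      ≤ ∑ i ∈ range k, (m * (g (i + 1) - g i) + 1) := sum_le_sum hstep
    _ = m * (g k - g 0) + k := by
      rw [sum_add_distrib, ← mul_sum, sum_range_sub, sum_const, card_range, nsmul_one]
    _ ≤ k ^ 2 / m := by
      simp only [g, CharP.cast_eq_zero, zero_div, sub_zero, log_one, mul_zero]
      linarith

lemma exp_neg_sq_div_le_prod_one_sub_div {m k : ℕ} (hm : 0 < m) (hkm : k ≤ m) :
    exp (-k ^ 2 / m) ≤ ∏ i ∈ range k, (1 - (i : ℝ) / m) := by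
  have hpos : ∀ i ∈ range k, 0 < 1 - (i : ℝ) / m := by
    intro i hi
    rw [sub_pos, div_lt_one (by exact_mod_cast hm)]
    exact_mod_cast (mem_range.1 hi).trans_le hkm
  calc exp (-k ^ 2 / m) ≤ exp (∑ i ∈ range k, log (1 - (i : ℝ) / m)) := by
        rw [exp_le_exp, neg_div, neg_le, ← sum_neg_distrib]
        exact sum_neg_log_one_sub_div_le hm hkm
    _ = ∏ i ∈ range k, (1 - (i : ℝ) / m) := by
        rw [exp_sum]
        exact prod_congr rfl fun i hi => exp_log (hpos i hi)

lemma prod_one_sub_div_eq_descFactorial_div {m : ℕ} (hm : 0 < m) (k : ℕ) :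
    ∏ i ∈ range k, (1 - (i : ℝ) / m) = m.descFactorial k / (m : ℝ) ^ k := by
  have hm' : (m : ℝ) ≠ 0 := by exact_mod_cast hm.ne'
  rw [← descPochhammer_eval_eq_descFactorial, descPochhammer_eval_eq_prod_range,
    pow_eq_prod_const, ← prod_div_distrib]
  exact prod_congr rfl fun i _ => by field_simp

lemma ckm_eq_succ_mul_descFactorial_div (m k : ℕ) :
    ckm m k = (k + 1) * m.descFactorial k / (m : ℝ) ^ k := by
  rw [ckm, Nat.descFactorial_eq_factorial_mul_choose, Nat.factorial_succ]
  push_cast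
  ring

theorem ckm_lower_bound_general (m k : ℕ) (hm : 1 ≤ m) (hkm : k ≤ m) :
    ckm m k ≥ ((k : ℝ) + 1) * Real.exp (-(k : ℝ) ^ 2 / (m : ℝ)) := by
  rw [ckm_eq_succ_mul_descFactorial_div, mul_div_assoc, ← prod_one_sub_div_eq_descFactorial_div hm]
  gcongr
  exact exp_neg_sq_div_le_prod_one_sub_div hm hkm

/-- Lower bound on the coefficients `c_{k,m}`. -/
theorem ckm_lower_bound (m k : ℕ) (hm : 1 ≤ m) (hk : 1 ≤ k) (hkm : k ≤ m) :
    ckm m k ≥ ((k : ℝ) + 1) * Real.exp (-(k : ℝ) ^ 2 / (m : ℝ)) :=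
  ckm_lower_bound_general m k hm hkm
end

section
/- For every integer m ≥ 1 and every s ∈ (0,1), ∑_{k=1}^m c_{k,m}·(1−s)^k ≥ ∫_0^{m+1} u·exp(−u²/m + u·ln(1−s)) du − 1. -/
/-!
On `[k, k + 1]` the integrand is at most `(k + 1) e^{-k²/m} (1 - s)^k`, so the integral is at most
`1 + ∑_{k=1}^m (k + 1) e^{-k²/m} (1 - s)^k`. Since `c_{k,m} = (k + 1) ∏_{j<k} (1 - j/m)`, it remains
to show `∏_{j<k} (1 - j/m) ≥ e^{-k²/m}`. Comparing `∑_{j<k} log (1 - j/m)` with the integral of the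
decreasing function `log (1 - t/m)` over `[0, k]` gives the lower bound
`-k - (m - k) log (1 - k/m)`, and `log x ≤ x - 1` turns this into `-k²/m`.
-/

open Real MeasureTheory Finset

lemma mul_log_add_one_div_sub_log_div_le (m : ℝ) {x : ℝ} (hx : 0 ≤ x) :
    x * (log ((x + 1) / m) - log (x / m)) ≤ 1 := by
  rcases hx.eq_or_lt with rfl | hx
  · simp
  rcases eq_or_ne m 0 with rfl | hm
  · simp
  calc x * (log ((x + 1) / m) - log (x / m)) = x * log ((x + 1) / x) := by
        rw [log_div (by positivity) hm, log_div hx.ne' hm, log_div (by positivity) hx.ne']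
        ring
    _ ≤ x * ((x + 1) / x - 1) := by gcongr; exact log_le_sub_one_of_pos (by positivity)
    _ = 1 := by field_simp; ring

/-- The left-hand side is `∫₀ᵏ log (1 - t / m) dt`, and `log (1 - t / m)` decreases in `t`. -/
lemma neg_sub_mul_log_le_sum_log_one_sub {m : ℝ} (hm : 0 < m) {k : ℕ} (hk : (k : ℝ) ≤ m) :
    -k - (m - k) * log ((m - k) / m) ≤ ∑ j ∈ range k, log (1 - j / m) := by
  induction k with
  | zero => simp [div_self hm.ne']
  | succ k ih =>
    push_cast at hk ⊢
    have hstep := mul_log_add_one_div_sub_log_div_le m (show 0 ≤ m - (k + 1) by linarith)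
    have hsub : 1 - (k : ℝ) / m = (m - (k + 1) + 1) / m := by field_simp; ring
    rw [sum_range_succ, hsub]
    have hprev := ih (by linarith)
    rw [show m - k = m - (k + 1) + 1 by ring] at hprev
    linarith

lemma neg_sq_div_le_sum_log_one_sub {m : ℝ} (hm : 0 < m) {k : ℕ} (hk : (k : ℝ) ≤ m) :
    -k ^ 2 / m ≤ ∑ j ∈ range k, log (1 - j / m) := by
  refine le_trans ?_ (neg_sub_mul_log_le_sum_log_one_sub hm hk)
  have hlog : (m - k) * log ((m - k) / m) ≤ (m - k) * ((m - k) / m - 1) := by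
    rcases (sub_nonneg.2 hk).eq_or_lt with h | h
    · simp [← h]
    · gcongr; exact log_le_sub_one_of_pos (by positivity)
  calc -(k : ℝ) ^ 2 / m = -k - (m - k) * ((m - k) / m - 1) := by field_simp; ring
    _ ≤ -k - (m - k) * log ((m - k) / m) := by linarith

lemma exp_neg_sq_div_le_prod_one_sub {m : ℝ} (hm : 0 < m) {k : ℕ} (hk : (k : ℝ) ≤ m) :
    exp (-k ^ 2 / m) ≤ ∏ j ∈ range k, (1 - j / m) := by
  have hpos : ∀ j ∈ range k, 0 < 1 - (j : ℝ) / m := fun j hj => by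
    have : (j : ℝ) < k := by exact_mod_cast mem_range.1 hj
    rw [sub_pos, div_lt_one hm]
    linarith
  rw [← prod_congr rfl fun j hj => exp_log (hpos j hj), ← exp_sum]
  exact exp_le_exp.2 (neg_sq_div_le_sum_log_one_sub hm hk)

lemma ckm_eq_mul_prod {m k : ℕ} (hm : m ≠ 0) (hk : k ≤ m) :
    ckm m k = (k + 1) * ∏ j ∈ range k, (1 - j / m : ℝ) := by
  have hdesc : (m.descFactorial k : ℝ) = ∏ j ∈ range k, ((m : ℝ) - j) := by
    rw [Nat.descFactorial_eq_prod_range, Nat.cast_prod]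
    exact prod_congr rfl fun j hj => Nat.cast_sub (by linarith [mem_range.1 hj])
  have hprod : ∏ j ∈ range k, (1 - j / m : ℝ) = (∏ j ∈ range k, ((m : ℝ) - j)) / (m : ℝ) ^ k := by
    rw [pow_eq_prod_const, ← prod_div_distrib]
    exact prod_congr rfl fun j _ => by field_simp
  rw [ckm, hprod, ← hdesc, Nat.descFactorial_eq_factorial_mul_choose]
  push_cast [Nat.factorial_succ]
  ring

lemma mul_exp_le_ckm_mul_pow {m k : ℕ} (hm : m ≠ 0) (hk : k ≤ m) {q : ℝ} (hq : 0 < q) :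
    (k + 1) * exp (-k ^ 2 / m + k * log q) ≤ ckm m k * q ^ k := by
  have hm' : (0 : ℝ) < m := by positivity
  rw [exp_add, exp_nat_mul, exp_log hq, ckm_eq_mul_prod hm hk, ← mul_assoc]
  gcongr
  exact exp_neg_sq_div_le_prod_one_sub hm' (by exact_mod_cast hk)

lemma mul_exp_le_of_mem_Icc {m L a u : ℝ} (hm : 0 ≤ m) (hL : L ≤ 0) (ha : 0 ≤ a)
    (hu : u ∈ Set.Icc a (a + 1)) :
    u * exp (-u ^ 2 / m + u * L) ≤ (a + 1) * exp (-a ^ 2 / m + a * L) := by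
  obtain ⟨hau, hua⟩ := hu
  have hexp : -u ^ 2 / m + u * L ≤ -a ^ 2 / m + a * L := by
    have : a ^ 2 ≤ u ^ 2 := by gcongr
    have : -u ^ 2 / m ≤ -a ^ 2 / m := by gcongr
    nlinarith
  gcongr

lemma integral_le_sum_of_le_on_Icc {f : ℝ → ℝ} {g : ℕ → ℝ} {n : ℕ}
    (hf : ∀ k < n, IntervalIntegrable f volume k (k + 1))
    (hfg : ∀ k < n, ∀ u ∈ Set.Icc (k : ℝ) (k + 1), f u ≤ g k) :
    ∫ u in (0 : ℝ)..n, f u ≤ ∑ k ∈ range n, g k := by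
  rw [← Nat.cast_zero, ← intervalIntegral.sum_integral_adjacent_intervals fun k hk => by
    simpa using hf k hk]
  refine sum_le_sum fun k hk => ?_
  have hk := mem_range.1 hk
  calc ∫ u in (k : ℝ)..(k + 1 : ℕ), f u ≤ ∫ _ in (k : ℝ)..(k + 1 : ℕ), g k := by
        push_cast
        exact intervalIntegral.integral_mono_on (by linarith) (hf k hk) intervalIntegrable_const
          (hfg k hk)
    _ = g k := by simp

/-- Integral lower bound on the sum `∑_{k=1}^m c_{k,m} (1-s)^k`. -/
theorem sum_ckm_ge_integral (m : ℕ) (hm : 1 ≤ m) (s : ℝ) (hs : s ∈ Set.Ioo (0:ℝ) 1) :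
    ∑ k ∈ Finset.Icc 1 m, ckm m k * (1 - s) ^ k
      ≥ (∫ u in (0:ℝ)..((m : ℝ) + 1),
          u * Real.exp (-u ^ 2 / (m : ℝ) + u * Real.log (1 - s))) - 1 := by
  have hq : 0 < 1 - s := by linarith [hs.2]
  have hL : log (1 - s) ≤ 0 := log_nonpos hq.le (by linarith [hs.1])
  set g : ℕ → ℝ := fun k => (k + 1) * exp (-k ^ 2 / m + k * log (1 - s))
  have hintegral : ∫ u in (0 : ℝ)..((m : ℝ) + 1), u * exp (-u ^ 2 / m + u * log (1 - s))
      ≤ ∑ k ∈ range (m + 1), g k := by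
    have := integral_le_sum_of_le_on_Icc (n := m + 1) (g := g)
      (fun _ _ => (by fun_prop : Continuous fun u : ℝ =>
        u * exp (-u ^ 2 / m + u * log (1 - s))).intervalIntegrable _ _)
      (fun k _ u hu => mul_exp_le_of_mem_Icc (Nat.cast_nonneg m) hL (Nat.cast_nonneg k) hu)
    simpa using this
  have hsplit : ∑ k ∈ range (m + 1), g k = 1 + ∑ k ∈ Icc 1 m, g k := by
    rw [range_eq_Ico, sum_eq_sum_Ico_succ_bot (by omega), Ico_add_one_right_eq_Icc]
    simp [g]
  have hterms : ∑ k ∈ Icc 1 m, g k ≤ ∑ k ∈ Icc 1 m, ckm m k * (1 - s) ^ k :=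
    sum_le_sum fun k hk => mul_exp_le_ckm_mul_pow (by omega) (mem_Icc.1 hk).2 hq
  linarith
end

section
/- Let n ≥ 2 and let g : ℝ^n → ℝ be a symmetric (permutation-invariant) function that is continuously differentiable on a neighborhood of the positive simplex 𝒫ₙ⁺ and Schur concave on 𝒫ₙ. Suppose κ > 0 is such that |g(p) − g(q)| ≤ κ·TV(p,q) for all p, q ∈ 𝒫ₙ. Then for every r ∈ 𝒫ₙ⁺ and all indices i, j with r_i = max_l r_l and r_j = min_l r_l, one has ∂_{r_i}g(r) − ∂_{r_j}g(r) ≤ κ. -/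
open Real MeasureTheory Finset

/-! Moving mass `t` from coordinate `j` to coordinate `i` of `r` stays in the simplex for
`0 ≤ t ≤ r j` and moves the point by at most `t` in total variation, so the Lipschitz bound caps
the growth of `g` along `e_i - e_j` at `κ * t`; dividing by `t` and letting `t → 0⁺` bounds the
directional derivative by `κ`. -/

section DirectionalDerivative

variable {E : Type*} [NormedAddCommGroup E] [NormedSpace ℝ E]

theorem fderiv_apply_le_of_eventually_sub_le {f : E → ℝ} {x v : E} {C : ℝ}
    (hf : DifferentiableAt ℝ f x)
    (hbound : ∀ᶠ t in nhdsWithin (0 : ℝ) (Set.Ioi 0), f (x + t • v) - f x ≤ C * t) :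
    fderiv ℝ f x v ≤ C := by
  have hline : HasDerivAt (fun t : ℝ => f (x + t • v)) (fderiv ℝ f x v) 0 := by
    have hpath : HasDerivAt (fun t : ℝ => x + t • v) v 0 := by
      simpa using ((hasDerivAt_id (0 : ℝ)).smul_const v).const_add x
    exact (by simpa using hf.hasFDerivAt : HasFDerivAt f (fderiv ℝ f x) (x + (0 : ℝ) • v))
      |>.comp_hasDerivAt 0 hpath
  have hslope : Filter.Tendsto (slope (fun t : ℝ => f (x + t • v)) 0)
      (nhdsWithin 0 (Set.Ioi 0)) (nhds (fderiv ℝ f x v)) := by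
    have h := hline.hasDerivWithinAt (s := Set.Ioi 0)
    rwa [hasDerivWithinAt_iff_tendsto_slope' Set.self_notMem_Ioi] at h
  refine le_of_tendsto hslope ?_
  filter_upwards [hbound, self_mem_nhdsWithin] with t ht (htpos : 0 < t)
  rw [slope_def_field, sub_zero, zero_smul, add_zero, div_le_iff₀ htpos]
  exact ht

end DirectionalDerivative

section MassTransfer

variable {n : ℕ}

theorem add_smul_single_sub_single_mem_probSimplex {r : Fin n → ℝ} (hr : r ∈ probSimplex n)
    (i j : Fin n) {t : ℝ} (ht₀ : 0 ≤ t) (htj : t ≤ r j) :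
    r + t • (Pi.single i 1 - Pi.single j 1) ∈ probSimplex n := by
  refine ⟨fun l => ?_, ?_⟩
  · have hi : 0 ≤ t * Pi.single (M := fun _ => ℝ) i 1 l := by
      rcases eq_or_ne l i with rfl | h <;> simp [*]
    have hj : t * Pi.single (M := fun _ => ℝ) j 1 l ≤ r l := by
      rcases eq_or_ne l j with rfl | h
      · simpa using htj
      · simpa [h] using hr.1 l
    simp only [Pi.add_apply, Pi.smul_apply, Pi.sub_apply, smul_eq_mul, mul_sub]
    linarith
  · simp [Finset.sum_add_distrib, ← Finset.mul_sum, hr.2]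

theorem TV_add_smul_single_sub_single_le (r : Fin n → ℝ) (i j : Fin n) {t : ℝ}
    (ht : 0 ≤ t) :
    TV (r + t • (Pi.single i 1 - Pi.single j 1)) r ≤ t := by
  have hcoord : ∀ l, |(r + t • (Pi.single i 1 - Pi.single j 1) : Fin n → ℝ) l - r l|
      ≤ t * Pi.single (M := fun _ => ℝ) i 1 l + t * Pi.single (M := fun _ => ℝ) j 1 l := by
    intro l
    simp only [Pi.add_apply, Pi.smul_apply, Pi.sub_apply, smul_eq_mul, add_sub_cancel_left,
      abs_mul, abs_of_nonneg ht, ← mul_add]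
    refine mul_le_mul_of_nonneg_left ((abs_sub _ _).trans ?_) ht
    rcases eq_or_ne l i with rfl | h <;> rcases eq_or_ne l j with rfl | h' <;> simp [*]
  calc TV (r + t • (Pi.single i 1 - Pi.single j 1)) r
      ≤ (∑ l, (t * Pi.single (M := fun _ => ℝ) i 1 l
          + t * Pi.single (M := fun _ => ℝ) j 1 l)) / 2 := by
        unfold TV; gcongr with l; exact hcoord l
    _ = t := by simp [Finset.sum_add_distrib, ← Finset.mul_sum]

end MassTransfer

theorem gradient_bound_of_schur_concave_lipschitz_general (n : ℕ)
    (g : (Fin n → ℝ) → ℝ)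
    (hdiff : ∃ U : Set (Fin n → ℝ), IsOpen U ∧ probSimplexPos n ⊆ U ∧ ContDiffOn ℝ 1 g U)
    (κ : ℝ) (hκ : 0 < κ)
    (hLip : ∀ p q : Fin n → ℝ, p ∈ probSimplex n → q ∈ probSimplex n →
      |g p - g q| ≤ κ * TV p q) :
    ∀ r : Fin n → ℝ, r ∈ probSimplexPos n → ∀ i j : Fin n,
      (∀ l, r l ≤ r i) → (∀ l, r j ≤ r l) →
      fderiv ℝ g r (Pi.single i 1) - fderiv ℝ g r (Pi.single j 1) ≤ κ := by
  intro r hr i j _ _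
  obtain ⟨U, hU, hrU, hgU⟩ := hdiff
  have hg : DifferentiableAt ℝ g r :=
    (hgU.contDiffAt (hU.mem_nhds (hrU hr))).differentiableAt one_ne_zero
  have hr_mem : r ∈ probSimplex n := ⟨fun l => (hr.1 l).le, hr.2⟩
  rw [← map_sub]
  refine fderiv_apply_le_of_eventually_sub_le hg ?_
  filter_upwards [Ioo_mem_nhdsGT (hr.1 j)] with t ⟨ht₀, htj⟩
  calc g (r + t • (Pi.single i 1 - Pi.single j 1)) - g r
      ≤ κ * TV (r + t • (Pi.single i 1 - Pi.single j 1)) r :=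
        (le_abs_self _).trans
          (hLip _ _ (add_smul_single_sub_single_mem_probSimplex hr_mem i j ht₀.le htj.le) hr_mem)
    _ ≤ κ * t := by gcongr; exact TV_add_smul_single_sub_single_le r i j ht₀.le

/-- Conversely, any Lipschitz constant `κ` for a symmetric Schur-concave function bounds
the extremal partial-derivative difference on the positive simplex. -/
theorem gradient_bound_of_schur_concave_lipschitz (n : ℕ) (hn : 2 ≤ n)
    (g : (Fin n → ℝ) → ℝ)
    (hsymm : ∀ (σ : Equiv.Perm (Fin n)) (p : Fin n → ℝ), g (p ∘ σ) = g p)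
    (hdiff : ∃ U : Set (Fin n → ℝ), IsOpen U ∧ probSimplexPos n ⊆ U ∧ ContDiffOn ℝ 1 g U)
    (hschur : ∀ p q : Fin n → ℝ, p ∈ probSimplex n → q ∈ probSimplex n →
      Majorizes q p → g q ≤ g p)
    (κ : ℝ) (hκ : 0 < κ)
    (hLip : ∀ p q : Fin n → ℝ, p ∈ probSimplex n → q ∈ probSimplex n →
      |g p - g q| ≤ κ * TV p q) :
    ∀ r : Fin n → ℝ, r ∈ probSimplexPos n → ∀ i j : Fin n,
      (∀ l, r l ≤ r i) → (∀ l, r j ≤ r l) →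
      fderiv ℝ g r (Pi.single i 1) - fderiv ℝ g r (Pi.single j 1) ≤ κ :=
  gradient_bound_of_schur_concave_lipschitz_general n g hdiff κ hκ hLip
end
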